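/- Fix an integer n ≥ 2, T > 0 and ε > 0 with ε < T, and define μ̄ := 1 + T/ε and μ : [0,∞) → ℝ by μ(t) = (T+ε)/(T+ε−t) for 0 ≤ t < T and μ(t) = μ̄ for t ≥ T. Let x_d : [0,∞) → ℝ be continuously differentiable with x_d and ẋ_d bounded. Let k₁,…,kₙ > 0, δ₁,…,δ_{n−1} > 0, and let σ₁,…,σₙ : [0,∞) → (0,∞) be continuous with ∫_0^∞ σᵢ ≤ σ̄ᵢ < ∞. Suppose x₁,…,xₙ, u, α₁,…,αₙ₋₁, α̂₁,…,α̂_{n−1}, ζ₁,…,ζₙ : [0,∞) → ℝ are continuously differentiable functions, and f₁,…,fₙ, g₁,…,gₙ : [0,∞) → ℝ are continuous and bounded with gᵢ(t) ≥ g₀ > 0, such that for all t ≥ 0: (plant) ẋᵢ = gᵢ·x_{i+1} + fᵢ for i = 1,…,n−1 and ẋₙ = gₙ·u + fₙ; (filters) δᵢ·α̂̇ᵢ = μ·(αᵢ − α̂ᵢ) with α̂ᵢ(0) = αᵢ(0) and |α̂ᵢ(t) − αᵢ(t)| ≤ τᵢ for constants τᵢ and lᵢ ≥ (sup_t gᵢ(t))·τᵢ;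 (coordinates) z₁ = x₁ − x_d, zᵢ = xᵢ − α̂_{i−1} for i ≥ 2, sᵢ = zᵢ − ζᵢ; (compensator) ζᵢ(0) = 0, ζ̇₁ = −k₁μζ₁ + g₁(α̂₁−α₁) + g₁ζ₂ − l₁ζ₁/√(ζ₁²+σ₁²), ζ̇ᵢ = −kᵢμζᵢ + gᵢ(α̂ᵢ−αᵢ) + gᵢζ_{i+1} − g_{i−1}ζ_{i−1} − lᵢζᵢ/√(ζᵢ²+σᵢ²) for 2 ≤ i ≤ n−1, ζ̇ₙ = −kₙμζₙ − g_{n−1}ζ_{n−1} − lₙζₙ/√(ζₙ²+σₙ²); (controller) α₁ = (1/g₁)(−k₁μz₁ + ẋ_d − f₁ − l₁ζ₁/√(ζ₁²+σ₁²) − s₁/√(s₁²+σ₁²)), αᵢ = (1/gᵢ)(−kᵢμzᵢ + α̂̇_{i−1} − fᵢ − g_{i−1}z_{i−1} − lᵢζᵢ/√(ζᵢ²+σᵢ²) − sᵢ/√(sᵢ²+σᵢ²)) for 2 ≤ i ≤ n−1, and u = (1/gₙ)(−kₙμzₙ + α̂̇_{n−1} − fₙ − g_{n−1}z_{n−1}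 − lₙζₙ/√(ζₙ²+σₙ²) − sₙ/√(sₙ²+σₙ²)). Then, with K₁ = 2·min{k₁,…,kₙ}: (i) the function V_n = (1/2)Σsᵢ² is bounded on [0,∞) and satisfies V_n(T) ≤ V_n(0)·(ε/(T+ε))^{K₁(T+ε)}; (ii) sᵢ(t) → 0 and ζᵢ(t) → 0 as t → ∞ for every i; and hence (iii) the tracking error z₁(t) = x₁(t) − x_d(t) is bounded and z₁(t) → 0 as t → ∞. -/

import Mathlib

/-!
The controller and the compensator turn both the compensated errors `sᵢ` and the compensator
states `ζᵢ` into chains `ẇᵢ = -kᵢ μ wᵢ + gᵢ wᵢ₊₁ - gᵢ₋₁ wᵢ₋₁ + pᵢ`, with `pᵢ = -sᵢ/√(sᵢ² + σᵢ²)`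
for `s` and `pᵢ = gᵢ(α̂ᵢ - αᵢ) - lᵢζᵢ/√(ζᵢ² + σᵢ²)` for `ζ`. In `Σ wᵢ²` the couplings cancel, so
`V̇ₛ ≤ -K₁ μ Vₛ`; integrating `μ` over `[0, T]` gives `(T + ε) log ((T + ε)/ε)`, hence the
prescribed-time bound. Since `lᵢ` dominates the filter error, the softening sign leaves at most
`lᵢσᵢ`, so `V̇_ζ ≤ -K₁ V_ζ + 2Σ lᵢσᵢ`, and an integrable forcing term still forces boundedness and
decay to zero. Finally `x₁ - x_d = s₁ + ζ₁`.
-/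

open Set Filter Finset MeasureTheory

theorem Convex.monotoneOn_of_hasDerivWithinAt_nonneg {D : Set ℝ} (hD : Convex ℝ D)
    {f f' : ℝ → ℝ} (hf : ∀ x ∈ D, HasDerivWithinAt f (f' x) D x) (hf' : ∀ x ∈ D, 0 ≤ f' x) :
    MonotoneOn f D :=
  _root_.monotoneOn_of_hasDerivWithinAt_nonneg hD (fun x hx => (hf x hx).continuousWithinAt)
    (fun x hx => (hf x (interior_subset hx)).mono interior_subset)
    (fun x hx => hf' x (interior_subset hx))

theorem Convex.antitoneOn_of_hasDerivWithinAt_nonpos {D : Set ℝ} (hD : Convex ℝ D)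
    {f f' : ℝ → ℝ} (hf : ∀ x ∈ D, HasDerivWithinAt f (f' x) D x) (hf' : ∀ x ∈ D, f' x ≤ 0) :
    AntitoneOn f D :=
  _root_.antitoneOn_of_hasDerivWithinAt_nonpos hD (fun x hx => (hf x hx).continuousWithinAt)
    (fun x hx => (hf x (interior_subset hx)).mono interior_subset)
    (fun x hx => hf' x (interior_subset hx))

theorem le_exp_mul_add_of_hasDerivWithinAt_le {W W' A a R h : ℝ → ℝ} {s t : ℝ} (hst : s ≤ t)
    (hW : ∀ τ ∈ Icc s t, HasDerivWithinAt W (W' τ) (Icc s t) τ)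
    (hA : ∀ τ ∈ Icc s t, HasDerivWithinAt A (a τ) (Icc s t) τ) (ha : ∀ τ ∈ Icc s t, 0 ≤ a τ)
    (hR : ∀ τ ∈ Icc s t, HasDerivWithinAt R (h τ) (Icc s t) τ) (hh : ∀ τ ∈ Icc s t, 0 ≤ h τ)
    (hle : ∀ τ ∈ Icc s t, W' τ ≤ -a τ * W τ + h τ) :
    W t ≤ Real.exp (-(A t - A s)) * W s + (R t - R s) := by
  have hAt : ∀ τ ∈ Icc s t, A τ ≤ A t := fun τ hτ =>
    (convex_Icc s t).monotoneOn_of_hasDerivWithinAt_nonneg hA ha hτ (right_mem_Icc.2 hst) hτ.2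
  have hY : AntitoneOn (fun τ => W τ * Real.exp (A τ) - Real.exp (A t) * R τ) (Icc s t) := by
    refine (convex_Icc s t).antitoneOn_of_hasDerivWithinAt_nonpos
      (fun τ hτ => ((hW τ hτ).mul (hA τ hτ).exp).sub ((hR τ hτ).const_mul _)) fun τ hτ => ?_
    have hexp : Real.exp (A τ) ≤ Real.exp (A t) := Real.exp_le_exp.2 (hAt τ hτ)
    have hWa : W' τ + a τ * W τ ≤ h τ := by linarith [hle τ hτ]
    nlinarith [Real.exp_pos (A τ), hh τ hτ]
  have hYst := hY (left_mem_Icc.2 hst) (right_mem_Icc.2 hst) hst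
  have hsplit : Real.exp (A s) = Real.exp (-(A t - A s)) * Real.exp (A t) := by
    rw [← Real.exp_add]; ring_nf
  have hpos := Real.exp_pos (A t)
  simp only at hYst
  rw [hsplit] at hYst
  nlinarith

theorem exists_hasDerivWithinAt_Ici_tendsto {h : ℝ → ℝ} (hc : ContinuousOn h (Ici 0))
    (hi : IntegrableOn h (Ioi 0)) :
    ∃ R : ℝ → ℝ, (∀ t ≥ (0 : ℝ), HasDerivWithinAt R (h t) (Ici 0) t) ∧
      Tendsto R atTop (nhds (∫ t in Ioi 0, h t)) := by
  -- extend `h` continuously to the left of `0` so that the fundamental theorem applies on `ℝ`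
  set h' : ℝ → ℝ := fun t => h (max t 0)
  have hh' : EqOn h' h (Ici 0) := fun t ht => by simp [h', max_eq_left (mem_Ici.1 ht)]
  have hc' : Continuous h' :=
    hc.comp_continuous (continuous_id.max continuous_const) fun t => le_max_right t 0
  refine ⟨fun t => ∫ τ in 0..t, h' τ, fun t ht => ?_, ?_⟩
  · rw [← hh' ht]
    exact (hc'.integral_hasStrictDerivAt 0 t).hasDerivAt.hasDerivWithinAt
  · rw [← setIntegral_congr_fun measurableSet_Ioi (hh'.mono Set.Ioi_subset_Ici_self)]
    exact intervalIntegral_tendsto_integral_Ioi 0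
      (hi.congr_fun (hh'.mono Set.Ioi_subset_Ici_self).symm measurableSet_Ioi) tendsto_id

section Decay

variable {W W' R h : ℝ → ℝ} {K : ℝ}

theorem le_exp_mul_add_of_hasDerivWithinAt_le_Ici (hK : 0 ≤ K)
    (hW : ∀ t ≥ (0 : ℝ), HasDerivWithinAt W (W' t) (Ici 0) t)
    (hR : ∀ t ≥ (0 : ℝ), HasDerivWithinAt R (h t) (Ici 0) t) (hh : ∀ t ≥ (0 : ℝ), 0 ≤ h t)
    (hle : ∀ t ≥ (0 : ℝ), W' t ≤ -K * W t + h t) {s t : ℝ} (hs : 0 ≤ s) (hst : s ≤ t) :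
    W t ≤ Real.exp (-(K * t - K * s)) * W s + (R t - R s) := by
  have hsub : Icc s t ⊆ Ici 0 := fun τ hτ => hs.trans hτ.1
  have h0 : ∀ τ ∈ Icc s t, (0 : ℝ) ≤ τ := fun τ hτ => hsub hτ
  exact le_exp_mul_add_of_hasDerivWithinAt_le hst (fun τ hτ => (hW τ (h0 τ hτ)).mono hsub)
    (fun τ _ => ((hasDerivAt_id τ).const_mul K).hasDerivWithinAt.congr_deriv (mul_one K))
    (fun _ _ => hK) (fun τ hτ => (hR τ (h0 τ hτ)).mono hsub) (fun τ hτ => hh τ (h0 τ hτ))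
    (fun τ hτ => hle τ (h0 τ hτ))

theorem le_add_of_hasDerivWithinAt_le (hK : 0 ≤ K)
    (hW : ∀ t ≥ (0 : ℝ), HasDerivWithinAt W (W' t) (Ici 0) t)
    (hR : ∀ t ≥ (0 : ℝ), HasDerivWithinAt R (h t) (Ici 0) t) (hh : ∀ t ≥ (0 : ℝ), 0 ≤ h t)
    (hle : ∀ t ≥ (0 : ℝ), W' t ≤ -K * W t + h t) (hW0 : 0 ≤ W 0) {L : ℝ}
    (hRL : Tendsto R atTop (nhds L)) {t : ℝ} (ht : 0 ≤ t) :
    W t ≤ W 0 + (L - R 0) := by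
  have hRmono : MonotoneOn R (Ici 0) := (convex_Ici 0).monotoneOn_of_hasDerivWithinAt_nonneg hR hh
  have hRt : R t ≤ L := ge_of_tendsto hRL <| (eventually_ge_atTop t).mono fun τ hτ =>
    hRmono ht (ht.trans hτ) hτ
  have hexp : Real.exp (-(K * t - K * 0)) ≤ 1 := Real.exp_le_one_iff.2 (by nlinarith)
  have := le_exp_mul_add_of_hasDerivWithinAt_le_Ici hK hW hR hh hle le_rfl ht
  nlinarith

theorem tendsto_zero_of_hasDerivWithinAt_le (hK : 0 < K)
    (hW : ∀ t ≥ (0 : ℝ), HasDerivWithinAt W (W' t) (Ici 0) t)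
    (hR : ∀ t ≥ (0 : ℝ), HasDerivWithinAt R (h t) (Ici 0) t) (hh : ∀ t ≥ (0 : ℝ), 0 ≤ h t)
    (hle : ∀ t ≥ (0 : ℝ), W' t ≤ -K * W t + h t) (hWnn : ∀ t ≥ (0 : ℝ), 0 ≤ W t) {L : ℝ}
    (hRL : Tendsto R atTop (nhds L)) :
    Tendsto W atTop (nhds 0) := by
  set B := W 0 + (L - R 0)
  -- compare `W t` with `W (t / 2)`: the exponential kills the first, the tail of `R` the second
  have hbound : ∀ t ≥ (0 : ℝ), W t ≤ Real.exp (-(K * t / 2)) * B + (R t - R (t / 2)) := by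
    intro t ht
    have hcmp := le_exp_mul_add_of_hasDerivWithinAt_le_Ici hK.le hW hR hh hle (by linarith)
      (by linarith : t / 2 ≤ t)
    have hB := le_add_of_hasDerivWithinAt_le hK.le hW hR hh hle (hWnn 0 le_rfl) hRL
      (by linarith : 0 ≤ t / 2)
    rw [show K * t - K * (t / 2) = K * t / 2 by ring] at hcmp
    nlinarith [Real.exp_pos (-(K * t / 2))]
  have hexp : Tendsto (fun t => Real.exp (-(K * t / 2))) atTop (nhds 0) :=
    Real.tendsto_exp_atBot.comp <| tendsto_neg_atTop_atBot.comp <|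
      (tendsto_id.const_mul_atTop hK).atTop_div_const two_pos
  have htail : Tendsto (fun t => R t - R (t / 2)) atTop (nhds 0) := by
    simpa using hRL.sub (hRL.comp (tendsto_id.atTop_div_const two_pos))
  refine tendsto_of_tendsto_of_tendsto_of_le_of_le' tendsto_const_nhds
    (by simpa using (hexp.mul_const B).add htail) ?_ ?_
  · filter_upwards [eventually_ge_atTop 0] with t ht using hWnn t ht
  · filter_upwards [eventually_ge_atTop 0] with t ht using hbound t ht

end Decay

theorem abs_sub_sq_div_sqrt_sq_add_sq_le (c : ℝ) {σ : ℝ} (hσ : 0 < σ) :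
    |c| - c ^ 2 / √(c ^ 2 + σ ^ 2) ≤ σ := by
  have hr : 0 < √(c ^ 2 + σ ^ 2) := Real.sqrt_pos.2 (by positivity)
  have hle : √(c ^ 2 + σ ^ 2) ≤ |c| + σ :=
    Real.sqrt_le_iff.2 ⟨by positivity, by nlinarith [sq_abs c, abs_nonneg c]⟩
  have : |c| - σ ≤ c ^ 2 / (|c| + σ) := by
    rw [le_div_iff₀ (by positivity)]; nlinarith [sq_abs c]
  linarith [div_le_div_of_nonneg_left (sq_nonneg c) hr hle]

theorem abs_le_sqrt_sum_sq {ι : Type*} {s : Finset ι} {w : ι → ℝ} {i : ι} (hi : i ∈ s) :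
    |w i| ≤ √(∑ j ∈ s, w j ^ 2) :=
  Real.abs_le_sqrt (single_le_sum (fun j _ => sq_nonneg (w j)) hi)

theorem tendsto_zero_of_tendsto_sum_sq {ι : Type*} {s : Finset ι} {w : ι → ℝ → ℝ}
    (hw : Tendsto (fun t => ∑ j ∈ s, w j t ^ 2) atTop (nhds 0)) {i : ι} (hi : i ∈ s) :
    Tendsto (w i) atTop (nhds 0) :=
  squeeze_zero_norm (fun t => abs_le_sqrt_sum_sq (w := (w · t)) hi) (by simpa using hw.sqrt)

theorem sum_Icc_mul_coupling_eq_zero {n : ℕ} {c w : ℕ → ℝ} (hc0 : c 0 = 0) (hcn : c n = 0) :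
    ∑ i ∈ Finset.Icc 1 n, w i * (c i * w (i + 1) - c (i - 1) * w (i - 1)) = 0 := by
  set F : ℕ → ℝ := fun j => c j * w j * w (j + 1)
  have hshift : ∑ i ∈ Finset.Icc 1 n, F (i - 1) = ∑ i ∈ Finset.Icc 1 n, F i := by
    have h := (sum_range_succ F n).symm.trans (sum_range_succ' F n)
    simp only [F, hc0, hcn, zero_mul, add_zero] at h
    simpa [← Finset.Ico_add_one_right_eq_Icc, sum_Ico_eq_sum_range, F, add_comm 1] using h
  rw [← sub_eq_zero.2 hshift.symm, ← sum_sub_distrib]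
  refine sum_congr rfl fun i hi => ?_
  obtain rfl | ⟨j, rfl⟩ : i = 0 ∨ ∃ j, i = j + 1 := by cases i <;> simp
  · simp at hi
  · simp only [F, Nat.add_sub_cancel]; ring

theorem hasDerivWithinAt_sum_sq_of_chain {n : ℕ} {w : ℕ → ℝ → ℝ} {a c p : ℕ → ℝ}
    {S : Set ℝ} {t : ℝ} (hc0 : c 0 = 0) (hcn : c n = 0)
    (hw : ∀ i ∈ Finset.Icc 1 n, HasDerivWithinAt (w i)
      (-a i * w i t + c i * w (i + 1) t - c (i - 1) * w (i - 1) t + p i) S t) :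
    HasDerivWithinAt (fun τ => ∑ i ∈ Finset.Icc 1 n, w i τ ^ 2)
      (∑ i ∈ Finset.Icc 1 n, 2 * w i t * (p i - a i * w i t)) S t := by
  refine (HasDerivWithinAt.fun_sum fun i hi => (hw i hi).pow 2).congr_deriv ?_
  have hcancel := sum_Icc_mul_coupling_eq_zero (w := (w · t)) hc0 hcn
  rw [← sub_eq_zero, ← sum_sub_distrib, ← mul_eq_zero_of_right 2 hcancel, mul_sum]
  refine sum_congr rfl fun i _ => ?_
  push_cast; ring

section PrescribedTime

variable {μ : ℝ → ℝ} {T ε : ℝ}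

theorem one_le_gain (hT : 0 ≤ T) (hε : 0 < ε)
    (hμ1 : ∀ t : ℝ, 0 ≤ t → t < T → μ t = (T + ε) / (T + ε - t))
    (hμ2 : ∀ t : ℝ, T ≤ t → μ t = 1 + T / ε) {t : ℝ} (ht : 0 ≤ t) : 1 ≤ μ t := by
  rcases lt_or_ge t T with htT | hTt
  · rw [hμ1 t ht htT, le_div_iff₀ (by linarith)]; linarith
  · rw [hμ2 t hTt]; linarith [div_nonneg hT hε.le]

theorem le_mul_rpow_of_hasDerivWithinAt_le_neg_mul_gain {W W' : ℝ → ℝ} {K : ℝ} (hT : 0 ≤ T)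
    (hε : 0 < ε) (hK : 0 ≤ K)
    (hμ1 : ∀ t : ℝ, 0 ≤ t → t < T → μ t = (T + ε) / (T + ε - t))
    (hμ2 : ∀ t : ℝ, T ≤ t → μ t = 1 + T / ε)
    (hW : ∀ t ≥ (0 : ℝ), HasDerivWithinAt W (W' t) (Ici 0) t)
    (hle : ∀ t ≥ (0 : ℝ), W' t ≤ -(K * μ t) * W t) :
    W T ≤ W 0 * (ε / (T + ε)) ^ (K * (T + ε)) := by
  set A : ℝ → ℝ := fun t => -(K * (T + ε)) * Real.log (T + ε - t)
  have hA : ∀ t ∈ Icc 0 T, HasDerivWithinAt A (K * μ t) (Icc 0 T) t := by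
    intro t ht
    have hpos : 0 < T + ε - t := by linarith [ht.2]
    have hμt : μ t = (T + ε) / (T + ε - t) := by
      rcases ht.2.lt_or_eq with htT | rfl
      · exact hμ1 t ht.1 htT
      · rw [hμ2 t le_rfl]; field_simp; ring
    refine ((((hasDerivAt_id t).const_sub (T + ε)).log hpos.ne').const_mul
      (-(K * (T + ε)))).hasDerivWithinAt.congr_deriv ?_
    rw [hμt, id]; field_simp
  have hsub : Icc 0 T ⊆ Ici 0 := Icc_subset_Ici_self
  have hcmp := le_exp_mul_add_of_hasDerivWithinAt_le (R := fun _ => 0) (h := fun _ => 0) hT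
    (fun t ht => (hW t ht.1).mono hsub) hA
    (fun t ht => mul_nonneg hK (zero_le_one.trans (one_le_gain hT hε hμ1 hμ2 ht.1)))
    (fun t _ => hasDerivWithinAt_const t _ 0) (fun _ _ => le_rfl)
    (fun t ht => by simpa using hle t ht.1)
  have hTε : 0 < T + ε := by linarith
  have hexp : Real.exp (-(A T - A 0)) = (ε / (T + ε)) ^ (K * (T + ε)) := by
    rw [Real.rpow_def_of_pos (div_pos hε hTε), Real.log_div hε.ne' hTε.ne']
    simp only [A, add_sub_cancel_left, sub_zero]
    ring_nf
  rw [hexp] at hcmp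
  linarith

end PrescribedTime

theorem two_mul_mul_neg_div_sqrt_sub_le (w σ : ℝ) {k μ K : ℝ} (hK : K ≤ 2 * k) (hμ : 0 ≤ μ) :
    2 * w * (-(w / √(w ^ 2 + σ ^ 2)) - k * μ * w) ≤ -(K * μ) * w ^ 2 := by
  have hsat : 0 ≤ w * (w / √(w ^ 2 + σ ^ 2)) := by
    rw [← mul_div_assoc, ← sq]; positivity
  nlinarith [mul_nonneg (mul_nonneg (sub_nonneg.2 hK) hμ) (sq_nonneg w)]

theorem two_mul_mul_sub_div_sqrt_sub_le (w : ℝ) {d l σ k μ K : ℝ} (hσ : 0 < σ) (hd : |d| ≤ l)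
    (hK : K ≤ 2 * k) (hk : 0 ≤ k) (hμ : 1 ≤ μ) :
    2 * w * (d - l * w / √(w ^ 2 + σ ^ 2) - k * μ * w) ≤ -K * w ^ 2 + 2 * l * σ := by
  have hl : 0 ≤ l := (abs_nonneg d).trans hd
  have hwd : w * d ≤ |w| * l :=
    (le_abs_self _).trans ((abs_mul w d).trans_le (mul_le_mul_of_nonneg_left hd (abs_nonneg w)))
  have hsoft := mul_le_mul_of_nonneg_left (abs_sub_sq_div_sqrt_sq_add_sq_le w hσ) hl
  have hdiv : w * (l * w / √(w ^ 2 + σ ^ 2)) = l * (w ^ 2 / √(w ^ 2 + σ ^ 2)) := by ring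
  nlinarith [mul_nonneg (mul_nonneg hk (sub_nonneg.2 hμ)) (sq_nonneg w),
    mul_nonneg (sub_nonneg.2 hK) (sq_nonneg w)]

theorem exists_hasDerivWithinAt_sum_sq_le_of_chain {n : ℕ} {w : ℕ → ℝ → ℝ}
    {a c p e : ℝ → ℕ → ℝ} {b : ℝ → ℝ} (hc0 : ∀ t, c t 0 = 0) (hcn : ∀ t, c t n = 0)
    (hw : ∀ i ∈ Finset.Icc 1 n, ∀ t ≥ (0 : ℝ), HasDerivWithinAt (w i)
      (-a t i * w i t + c t i * w (i + 1) t - c t (i - 1) * w (i - 1) t + p t i) (Ici 0) t)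
    (hp : ∀ t ≥ (0 : ℝ), ∀ i ∈ Finset.Icc 1 n,
      2 * w i t * (p t i - a t i * w i t) ≤ -b t * w i t ^ 2 + e t i) :
    ∃ W' : ℝ → ℝ, (∀ t ≥ (0 : ℝ),
      HasDerivWithinAt (fun τ => ∑ i ∈ Finset.Icc 1 n, w i τ ^ 2) (W' t) (Ici 0) t) ∧
      ∀ t ≥ (0 : ℝ), W' t ≤ -b t * ∑ i ∈ Finset.Icc 1 n, w i t ^ 2 + ∑ i ∈ Finset.Icc 1 n, e t i :=
  ⟨fun t => ∑ i ∈ Finset.Icc 1 n, 2 * w i t * (p t i - a t i * w i t),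
    fun t ht => hasDerivWithinAt_sum_sq_of_chain (hc0 t) (hcn t) fun i hi => hw i hi t ht,
    fun t ht => by
      rw [mul_sum, ← sum_add_distrib]
      exact sum_le_sum (hp t ht)⟩

-- Vanishing at `0` and `n`, it lets the first and last equations of the chain take the same form
-- as the middle ones.
def couplingGain (n : ℕ) (g : ℕ → ℝ → ℝ) (t : ℝ) (i : ℕ) : ℝ :=
  if 1 ≤ i ∧ i < n then g i t else 0

section ClosedLoop

variable {n : ℕ} {g : ℕ → ℝ → ℝ} {t : ℝ}

@[simp] theorem couplingGain_zero : couplingGain n g t 0 = 0 := by simp [couplingGain]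

@[simp] theorem couplingGain_self : couplingGain n g t n = 0 := by simp [couplingGain]

theorem couplingGain_of_lt {i : ℕ} (hi : 1 ≤ i) (hin : i < n) : couplingGain n g t i = g i t :=
  if_pos ⟨hi, hin⟩

variable {μ : ℝ → ℝ} {k l : ℕ → ℝ} {σ : ℕ → ℝ → ℝ} {α αhat αhat' ζ x z s f : ℕ → ℝ → ℝ}
  {xd xd' u : ℝ → ℝ}

theorem hasDerivWithinAt_compensator (hn : 2 ≤ n)
    (hζ1 : ∀ t ≥ (0:ℝ), HasDerivWithinAt (ζ 1)
      (-k 1 * μ t * ζ 1 t + g 1 t * (αhat 1 t - α 1 t) + g 1 t * ζ 2 t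
        - l 1 * ζ 1 t / Real.sqrt ((ζ 1 t) ^ 2 + (σ 1 t) ^ 2)) (Set.Ici (0:ℝ)) t)
    (hζmid : ∀ i ∈ Finset.Icc 2 (n - 1), ∀ t ≥ (0:ℝ), HasDerivWithinAt (ζ i)
      (-k i * μ t * ζ i t + g i t * (αhat i t - α i t) + g i t * ζ (i + 1) t
        - g (i - 1) t * ζ (i - 1) t
        - l i * ζ i t / Real.sqrt ((ζ i t) ^ 2 + (σ i t) ^ 2)) (Set.Ici (0:ℝ)) t)
    (hζn : ∀ t ≥ (0:ℝ), HasDerivWithinAt (ζ n)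
      (-k n * μ t * ζ n t - g (n - 1) t * ζ (n - 1) t
        - l n * ζ n t / Real.sqrt ((ζ n t) ^ 2 + (σ n t) ^ 2)) (Set.Ici (0:ℝ)) t) :
    ∀ i ∈ Finset.Icc 1 n, ∀ t ≥ (0 : ℝ), HasDerivWithinAt (ζ i)
      (-(k i * μ t) * ζ i t + couplingGain n g t i * ζ (i + 1) t
        - couplingGain n g t (i - 1) * ζ (i - 1) t
        + (couplingGain n g t i * (αhat i t - α i t) - l i * ζ i t / √(ζ i t ^ 2 + σ i t ^ 2)))
      (Ici 0) t := by
  intro i hi t ht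
  rw [Finset.mem_Icc] at hi
  obtain rfl | ⟨hi2, hin⟩ | rfl : i = 1 ∨ 2 ≤ i ∧ i < n ∨ n = i := by omega
  · refine (hζ1 t ht).congr_deriv ?_
    rw [couplingGain_of_lt le_rfl (by omega)]; simp only [Nat.sub_self, couplingGain_zero]; ring
  · refine (hζmid i (Finset.mem_Icc.2 ⟨hi2, by omega⟩) t ht).congr_deriv ?_
    rw [couplingGain_of_lt hi.1 hin, couplingGain_of_lt (by omega) (by omega)]; ring
  · refine (hζn t ht).congr_deriv ?_
    rw [couplingGain_of_lt (i := n - 1) (by omega) (by omega)]; simp only [couplingGain_self]; ring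

theorem hasDerivWithinAt_compensatedError (hn : 2 ≤ n)
    (hg : ∀ i ∈ Finset.Icc 1 n, ∀ t ≥ (0:ℝ), g i t ≠ 0)
    (hxd_deriv : ∀ t ≥ (0:ℝ), HasDerivWithinAt xd (xd' t) (Set.Ici (0:ℝ)) t)
    (hplant : ∀ i ∈ Finset.Icc 1 (n - 1), ∀ t ≥ (0:ℝ),
      HasDerivWithinAt (x i) (g i t * x (i + 1) t + f i t) (Set.Ici (0:ℝ)) t)
    (hplantn : ∀ t ≥ (0:ℝ),
      HasDerivWithinAt (x n) (g n t * u t + f n t) (Set.Ici (0:ℝ)) t)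
    (hfilt_deriv : ∀ i ∈ Finset.Icc 1 (n - 1), ∀ t ≥ (0:ℝ),
      HasDerivWithinAt (αhat i) (αhat' i t) (Set.Ici (0:ℝ)) t)
    (hz1 : ∀ t : ℝ, z 1 t = x 1 t - xd t)
    (hz : ∀ i ∈ Finset.Icc 2 n, ∀ t : ℝ, z i t = x i t - αhat (i - 1) t)
    (hs : ∀ i ∈ Finset.Icc 1 n, ∀ t : ℝ, s i t = z i t - ζ i t)
    (hζ : ∀ i ∈ Finset.Icc 1 n, ∀ t ≥ (0 : ℝ), HasDerivWithinAt (ζ i)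
      (-(k i * μ t) * ζ i t + couplingGain n g t i * ζ (i + 1) t
        - couplingGain n g t (i - 1) * ζ (i - 1) t
        + (couplingGain n g t i * (αhat i t - α i t) - l i * ζ i t / √(ζ i t ^ 2 + σ i t ^ 2)))
      (Ici 0) t)
    (hα1 : ∀ t ≥ (0:ℝ), α 1 t = (1 / g 1 t) *
      (-k 1 * μ t * z 1 t + xd' t - f 1 t
        - l 1 * ζ 1 t / Real.sqrt ((ζ 1 t) ^ 2 + (σ 1 t) ^ 2)
        - s 1 t / Real.sqrt ((s 1 t) ^ 2 + (σ 1 t) ^ 2)))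
    (hαmid : ∀ i ∈ Finset.Icc 2 (n - 1), ∀ t ≥ (0:ℝ), α i t = (1 / g i t) *
      (-k i * μ t * z i t + αhat' (i - 1) t - f i t - g (i - 1) t * z (i - 1) t
        - l i * ζ i t / Real.sqrt ((ζ i t) ^ 2 + (σ i t) ^ 2)
        - s i t / Real.sqrt ((s i t) ^ 2 + (σ i t) ^ 2)))
    (hu : ∀ t ≥ (0:ℝ), u t = (1 / g n t) *
      (-k n * μ t * z n t + αhat' (n - 1) t - f n t - g (n - 1) t * z (n - 1) t
        - l n * ζ n t / Real.sqrt ((ζ n t) ^ 2 + (σ n t) ^ 2)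
        - s n t / Real.sqrt ((s n t) ^ 2 + (σ n t) ^ 2))) :
    ∀ i ∈ Finset.Icc 1 n, ∀ t ≥ (0 : ℝ), HasDerivWithinAt (s i)
      (-(k i * μ t) * s i t + couplingGain n g t i * s (i + 1) t
        - couplingGain n g t (i - 1) * s (i - 1) t + -(s i t / √(s i t ^ 2 + σ i t ^ 2)))
      (Ici 0) t := by
  intro i hi t ht
  have hs' : ∀ j, 1 ≤ j → j ≤ n → s j t = z j t - ζ j t := fun j h1 h2 =>
    hs j (Finset.mem_Icc.2 ⟨h1, h2⟩) t
  have hx_next : ∀ j, 1 ≤ j → j < n → z (j + 1) t = x (j + 1) t - αhat j t := fun j h1 h2 => by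
    simpa using hz (j + 1) (Finset.mem_Icc.2 ⟨by omega, h2⟩) t
  have hcontrol : ∀ {a b : ℝ}, a = 1 / g i t * b → g i t * a = b := fun hab => by
    rw [hab, one_div, mul_inv_cancel_left₀ (hg i hi t ht)]
  rw [Finset.mem_Icc] at hi
  obtain rfl | ⟨hi2, hin⟩ | rfl : i = 1 ∨ 2 ≤ i ∧ i < n ∨ n = i := by omega
  · have hsf : ∀ τ, s 1 τ = x 1 τ - xd τ - ζ 1 τ := fun τ => by
      rw [hs 1 (Finset.mem_Icc.2 ⟨le_rfl, by omega⟩) τ, hz1 τ]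
    refine ((((hplant 1 (Finset.mem_Icc.2 ⟨le_rfl, by omega⟩) t ht).sub (hxd_deriv t ht)).sub
      (hζ 1 (Finset.mem_Icc.2 ⟨le_rfl, by omega⟩) t ht)).congr (fun τ _ => hsf τ)
      (hsf t)).congr_deriv ?_
    rw [couplingGain_of_lt le_rfl (by omega)]
    simp only [Nat.sub_self, couplingGain_zero]
    linear_combination hcontrol (hα1 t ht) - g 1 t * hx_next 1 le_rfl (by omega)
      - g 1 t * hs' 2 (by omega) (by omega) + k 1 * μ t * hs' 1 le_rfl (by omega)
  · have hsf : ∀ τ, s i τ = x i τ - αhat (i - 1) τ - ζ i τ := fun τ => by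
      rw [hs i (Finset.mem_Icc.2 ⟨by omega, by omega⟩) τ, hz i (Finset.mem_Icc.2 ⟨hi2, by omega⟩) τ]
    refine ((((hplant i (Finset.mem_Icc.2 ⟨by omega, by omega⟩) t ht).sub
      (hfilt_deriv (i - 1) (Finset.mem_Icc.2 ⟨by omega, by omega⟩) t ht)).sub
      (hζ i (Finset.mem_Icc.2 ⟨by omega, by omega⟩) t ht)).congr (fun τ _ => hsf τ)
      (hsf t)).congr_deriv ?_
    rw [couplingGain_of_lt (by omega) hin, couplingGain_of_lt (i := i - 1) (by omega) (by omega)]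
    linear_combination hcontrol (hαmid i (Finset.mem_Icc.2 ⟨hi2, by omega⟩) t ht)
      - g i t * hx_next i (by omega) hin - g i t * hs' (i + 1) (by omega) hin
      + k i * μ t * hs' i (by omega) hin.le + g (i - 1) t * hs' (i - 1) (by omega) (by omega)
  · have hsf : ∀ τ, s n τ = x n τ - αhat (n - 1) τ - ζ n τ := fun τ => by
      rw [hs n (Finset.mem_Icc.2 ⟨by omega, le_rfl⟩) τ, hz n (Finset.mem_Icc.2 ⟨hn, le_rfl⟩) τ]
    refine ((((hplantn t ht).sub
      (hfilt_deriv (n - 1) (Finset.mem_Icc.2 ⟨by omega, le_rfl⟩) t ht)).sub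
      (hζ n (Finset.mem_Icc.2 ⟨by omega, le_rfl⟩) t ht)).congr (fun τ _ => hsf τ)
      (hsf t)).congr_deriv ?_
    rw [couplingGain_of_lt (i := n - 1) (by omega) (by omega)]
    simp only [couplingGain_self]
    linear_combination hcontrol (hu t ht) + k n * μ t * hs' n (by omega) le_rfl
      + g (n - 1) t * hs' (n - 1) (by omega) (by omega)

theorem abs_couplingGain_mul_sub_le (hg_bdd : ∀ i ∈ Finset.Icc 1 n, BddAbove (g i '' Ici 0))
    (hg_nonneg : ∀ i ∈ Finset.Icc 1 n, ∀ t ≥ (0:ℝ), 0 ≤ g i t) {τ : ℕ → ℝ}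
    (hfilt_err : ∀ i ∈ Finset.Icc 1 (n - 1), ∀ t ≥ (0:ℝ), |αhat i t - α i t| ≤ τ i)
    (hl : ∀ i ∈ Finset.Icc 1 (n - 1), sSup ((g i) '' Set.Ici (0:ℝ)) * τ i ≤ l i)
    (hln : 0 ≤ l n) :
    ∀ i ∈ Finset.Icc 1 n, ∀ t ≥ (0:ℝ), |couplingGain n g t i * (αhat i t - α i t)| ≤ l i := by
  intro i hi t ht
  rcases (Finset.mem_Icc.1 hi).2.lt_or_eq with hin | rfl
  · have hi' : i ∈ Finset.Icc 1 (n - 1) := Finset.mem_Icc.2 ⟨(Finset.mem_Icc.1 hi).1, by omega⟩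
    have hgt := hg_nonneg i hi t ht
    have hgS : g i t ≤ sSup (g i '' Ici 0) := le_csSup (hg_bdd i hi) (mem_image_of_mem _ ht)
    have hτ : 0 ≤ τ i := (abs_nonneg _).trans (hfilt_err i hi' t ht)
    rw [couplingGain_of_lt (Finset.mem_Icc.1 hi).1 hin, abs_mul, abs_of_nonneg hgt]
    calc g i t * |αhat i t - α i t| ≤ g i t * τ i :=
          mul_le_mul_of_nonneg_left (hfilt_err i hi' t ht) hgt
      _ ≤ sSup (g i '' Ici 0) * τ i := mul_le_mul_of_nonneg_right hgS hτ
      _ ≤ l i := hl i hi'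
  · simpa using hln

theorem sum_sq_compensatedError_le_and_tendsto_zero {T ε K : ℝ} (hT : 0 ≤ T) (hε : 0 < ε)
    (hμ1 : ∀ t : ℝ, 0 ≤ t → t < T → μ t = (T + ε) / (T + ε - t))
    (hμ2 : ∀ t : ℝ, T ≤ t → μ t = 1 + T / ε) (hK : 0 < K)
    (hKk : ∀ i ∈ Finset.Icc 1 n, K ≤ 2 * k i)
    (hsd : ∀ i ∈ Finset.Icc 1 n, ∀ t ≥ (0 : ℝ), HasDerivWithinAt (s i)
      (-(k i * μ t) * s i t + couplingGain n g t i * s (i + 1) t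
        - couplingGain n g t (i - 1) * s (i - 1) t + -(s i t / √(s i t ^ 2 + σ i t ^ 2)))
      (Ici 0) t) :
    (∀ t ≥ (0 : ℝ), ∑ i ∈ Finset.Icc 1 n, s i t ^ 2 ≤ ∑ i ∈ Finset.Icc 1 n, s i 0 ^ 2) ∧
      ∑ i ∈ Finset.Icc 1 n, s i T ^ 2 ≤
        (∑ i ∈ Finset.Icc 1 n, s i 0 ^ 2) * (ε / (T + ε)) ^ (K * (T + ε)) ∧
      Tendsto (fun t => ∑ i ∈ Finset.Icc 1 n, s i t ^ 2) atTop (nhds 0) := by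
  have hμ : ∀ t ≥ (0 : ℝ), 1 ≤ μ t := fun t ht => one_le_gain hT hε hμ1 hμ2 ht
  obtain ⟨V', hV, hV'⟩ := exists_hasDerivWithinAt_sum_sq_le_of_chain (b := fun t => K * μ t)
    (e := fun _ _ => 0) (fun _ => couplingGain_zero) (fun _ => couplingGain_self) hsd
    fun t ht i hi => by
      simpa using two_mul_mul_neg_div_sqrt_sub_le (s i t) (σ i t) (hKk i hi)
        (zero_le_one.trans (hμ t ht))
  have hVnn : ∀ t, 0 ≤ ∑ i ∈ Finset.Icc 1 n, s i t ^ 2 := fun t => sum_nonneg fun i _ => sq_nonneg _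
  have hV'K : ∀ t ≥ (0 : ℝ), V' t ≤ -K * ∑ i ∈ Finset.Icc 1 n, s i t ^ 2 + 0 := fun t ht => by
    have := hV' t ht
    simp only [sum_const_zero, add_zero] at this ⊢
    nlinarith [mul_nonneg (mul_nonneg hK.le (sub_nonneg.2 (hμ t ht))) (hVnn t)]
  have hR : ∀ t ≥ (0 : ℝ), HasDerivWithinAt (fun _ => (0 : ℝ)) 0 (Ici 0) t :=
    fun t _ => hasDerivWithinAt_const t _ 0
  refine ⟨fun t ht => ?_, ?_, ?_⟩
  · simpa using le_add_of_hasDerivWithinAt_le hK.le hV hR (fun _ _ => le_rfl) hV'K (hVnn 0)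
      tendsto_const_nhds ht
  · exact le_mul_rpow_of_hasDerivWithinAt_le_neg_mul_gain hT hε hK.le hμ1 hμ2 hV
      fun t ht => by simpa using hV' t ht
  · exact tendsto_zero_of_hasDerivWithinAt_le hK hV hR (fun _ _ => le_rfl) hV'K
      (fun t _ => hVnn t) tendsto_const_nhds

theorem sum_sq_compensator_bddAbove_and_tendsto_zero {K : ℝ} (hK : 0 < K)
    (hk : ∀ i ∈ Finset.Icc 1 n, 0 < k i) (hKk : ∀ i ∈ Finset.Icc 1 n, K ≤ 2 * k i)
    (hμ : ∀ t ≥ (0 : ℝ), 1 ≤ μ t)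
    (hσcont : ∀ i ∈ Finset.Icc 1 n, ContinuousOn (σ i) (Set.Ici (0:ℝ)))
    (hσpos : ∀ i ∈ Finset.Icc 1 n, ∀ t ≥ (0:ℝ), 0 < σ i t)
    (hσint : ∀ i ∈ Finset.Icc 1 n, IntegrableOn (σ i) (Set.Ioi (0:ℝ)))
    (hd : ∀ i ∈ Finset.Icc 1 n, ∀ t ≥ (0:ℝ), |couplingGain n g t i * (αhat i t - α i t)| ≤ l i)
    (hζd : ∀ i ∈ Finset.Icc 1 n, ∀ t ≥ (0 : ℝ), HasDerivWithinAt (ζ i)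
      (-(k i * μ t) * ζ i t + couplingGain n g t i * ζ (i + 1) t
        - couplingGain n g t (i - 1) * ζ (i - 1) t
        + (couplingGain n g t i * (αhat i t - α i t) - l i * ζ i t / √(ζ i t ^ 2 + σ i t ^ 2)))
      (Ici 0) t) :
    (∃ B, ∀ t ≥ (0 : ℝ), ∑ i ∈ Finset.Icc 1 n, ζ i t ^ 2 ≤ B) ∧
      Tendsto (fun t => ∑ i ∈ Finset.Icc 1 n, ζ i t ^ 2) atTop (nhds 0) := by
  set q : ℝ → ℝ := fun t => ∑ i ∈ Finset.Icc 1 n, 2 * l i * σ i t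
  obtain ⟨V', hV, hV'⟩ := exists_hasDerivWithinAt_sum_sq_le_of_chain (b := fun _ => K)
    (e := fun t i => 2 * l i * σ i t) (fun _ => couplingGain_zero) (fun _ => couplingGain_self) hζd
    fun t ht i hi => by
      simpa [sub_eq_add_neg] using two_mul_mul_sub_div_sqrt_sub_le (ζ i t) (hσpos i hi t ht)
        (hd i hi t ht) (hKk i hi) (hk i hi).le (hμ t ht)
  have hl : ∀ i ∈ Finset.Icc 1 n, 0 ≤ l i := fun i hi => (abs_nonneg _).trans (hd i hi 0 le_rfl)
  have hq : ∀ t ≥ (0 : ℝ), 0 ≤ q t := fun t ht =>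
    sum_nonneg fun i hi => mul_nonneg (mul_nonneg zero_le_two (hl i hi)) (hσpos i hi t ht).le
  obtain ⟨R, hR, hRL⟩ := exists_hasDerivWithinAt_Ici_tendsto (h := q)
    (continuousOn_finsetSum _ fun i hi => (hσcont i hi).const_smul (2 * l i))
    (integrable_finsetSum _ fun i hi => (hσint i hi).const_mul (2 * l i))
  have hVnn : ∀ t, 0 ≤ ∑ i ∈ Finset.Icc 1 n, ζ i t ^ 2 := fun t => sum_nonneg fun i _ => sq_nonneg _
  exact ⟨⟨_, fun t ht => le_add_of_hasDerivWithinAt_le hK.le hV hR hq hV' (hVnn 0) hRL ht⟩,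
    tendsto_zero_of_hasDerivWithinAt_le hK hV hR hq hV' (fun t _ => hVnn t) hRL⟩

end ClosedLoop

/-- Theorem 1 of the paper, along a fixed closed-loop solution of the strict-feedback-like
plant `ẋᵢ = gᵢxᵢ₊₁ + fᵢ`, `ẋₙ = gₙu + fₙ`, with time-varying command filters, softening-sign
error compensator and time-varying feedback controller: the compensated-error Lyapunov
function `Vₙ = (1/2)Σsᵢ²` is bounded and satisfies the prescribed-time bound
`Vₙ(T) ≤ Vₙ(0)·(ε/(T+ε))^(K₁(T+ε))`; all `sᵢ` and `ζᵢ` tend to zero; hence the tracking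
error `z₁ = x₁ − x_d` is bounded and tends to zero. -/
theorem theorem1
    (n : ℕ) (hn : 2 ≤ n)
    (T ε : ℝ) (hT : 0 < T) (hε : 0 < ε)
    (μ : ℝ → ℝ)
    (hμ1 : ∀ t : ℝ, 0 ≤ t → t < T → μ t = (T + ε) / (T + ε - t))
    (hμ2 : ∀ t : ℝ, T ≤ t → μ t = 1 + T / ε)
    -- reference trajectory
    (xd xd' : ℝ → ℝ)
    (hxd_deriv : ∀ t ≥ (0:ℝ), HasDerivWithinAt xd (xd' t) (Set.Ici (0:ℝ)) t)
    -- design parameters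
    (k : ℕ → ℝ) (hk : ∀ i ∈ Finset.Icc 1 n, 0 < k i)
    (σ : ℕ → ℝ → ℝ) (σbar : ℕ → ℝ)
    (hσcont : ∀ i ∈ Finset.Icc 1 n, ContinuousOn (σ i) (Set.Ici (0:ℝ)))
    (hσpos : ∀ i ∈ Finset.Icc 1 n, ∀ t ≥ (0:ℝ), 0 < σ i t)
    (hσint : ∀ i ∈ Finset.Icc 1 n, MeasureTheory.IntegrableOn (σ i) (Set.Ici (0:ℝ)) ∧
      ∫ t in Set.Ici (0:ℝ), σ i t ≤ σbar i)
    -- closed-loop signals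
    (x : ℕ → ℝ → ℝ) (u : ℝ → ℝ)
    (α αhat αhat' : ℕ → ℝ → ℝ) (ζ : ℕ → ℝ → ℝ)
    -- system functions along the solution
    (f g : ℕ → ℝ → ℝ) (g₀ : ℝ) (hg₀ : 0 < g₀)
    (hfg_bdd : ∃ M : ℝ, ∀ i ∈ Finset.Icc 1 n, ∀ t ≥ (0:ℝ), |f i t| ≤ M ∧ |g i t| ≤ M)
    (hg_lower : ∀ i ∈ Finset.Icc 1 n, ∀ t ≥ (0:ℝ), g₀ ≤ g i t)
    -- plant
    (hplant : ∀ i ∈ Finset.Icc 1 (n - 1), ∀ t ≥ (0:ℝ),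
      HasDerivWithinAt (x i) (g i t * x (i + 1) t + f i t) (Set.Ici (0:ℝ)) t)
    (hplantn : ∀ t ≥ (0:ℝ),
      HasDerivWithinAt (x n) (g n t * u t + f n t) (Set.Ici (0:ℝ)) t)
    -- command filters with time-varying gain
    (hfilt_deriv : ∀ i ∈ Finset.Icc 1 (n - 1), ∀ t ≥ (0:ℝ),
      HasDerivWithinAt (αhat i) (αhat' i t) (Set.Ici (0:ℝ)) t)
    (τ l : ℕ → ℝ)
    (hfilt_err : ∀ i ∈ Finset.Icc 1 (n - 1), ∀ t ≥ (0:ℝ), |αhat i t - α i t| ≤ τ i)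
    (hl : ∀ i ∈ Finset.Icc 1 (n - 1), sSup ((g i) '' Set.Ici (0:ℝ)) * τ i ≤ l i)
    (hln : 0 ≤ l n)
    -- coordinate changes and compensated tracking errors
    (z s : ℕ → ℝ → ℝ)
    (hz1 : ∀ t : ℝ, z 1 t = x 1 t - xd t)
    (hz : ∀ i ∈ Finset.Icc 2 n, ∀ t : ℝ, z i t = x i t - αhat (i - 1) t)
    (hs : ∀ i ∈ Finset.Icc 1 n, ∀ t : ℝ, s i t = z i t - ζ i t)
    -- time-varying error compensator
    (hζ1 : ∀ t ≥ (0:ℝ), HasDerivWithinAt (ζ 1)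
      (-k 1 * μ t * ζ 1 t + g 1 t * (αhat 1 t - α 1 t) + g 1 t * ζ 2 t
        - l 1 * ζ 1 t / Real.sqrt ((ζ 1 t) ^ 2 + (σ 1 t) ^ 2)) (Set.Ici (0:ℝ)) t)
    (hζmid : ∀ i ∈ Finset.Icc 2 (n - 1), ∀ t ≥ (0:ℝ), HasDerivWithinAt (ζ i)
      (-k i * μ t * ζ i t + g i t * (αhat i t - α i t) + g i t * ζ (i + 1) t
        - g (i - 1) t * ζ (i - 1) t
        - l i * ζ i t / Real.sqrt ((ζ i t) ^ 2 + (σ i t) ^ 2)) (Set.Ici (0:ℝ)) t)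
    (hζn : ∀ t ≥ (0:ℝ), HasDerivWithinAt (ζ n)
      (-k n * μ t * ζ n t - g (n - 1) t * ζ (n - 1) t
        - l n * ζ n t / Real.sqrt ((ζ n t) ^ 2 + (σ n t) ^ 2)) (Set.Ici (0:ℝ)) t)
    -- virtual and actual controllers
    (hα1 : ∀ t ≥ (0:ℝ), α 1 t = (1 / g 1 t) *
      (-k 1 * μ t * z 1 t + xd' t - f 1 t
        - l 1 * ζ 1 t / Real.sqrt ((ζ 1 t) ^ 2 + (σ 1 t) ^ 2)
        - s 1 t / Real.sqrt ((s 1 t) ^ 2 + (σ 1 t) ^ 2)))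
    (hαmid : ∀ i ∈ Finset.Icc 2 (n - 1), ∀ t ≥ (0:ℝ), α i t = (1 / g i t) *
      (-k i * μ t * z i t + αhat' (i - 1) t - f i t - g (i - 1) t * z (i - 1) t
        - l i * ζ i t / Real.sqrt ((ζ i t) ^ 2 + (σ i t) ^ 2)
        - s i t / Real.sqrt ((s i t) ^ 2 + (σ i t) ^ 2)))
    (hu : ∀ t ≥ (0:ℝ), u t = (1 / g n t) *
      (-k n * μ t * z n t + αhat' (n - 1) t - f n t - g (n - 1) t * z (n - 1) t
        - l n * ζ n t / Real.sqrt ((ζ n t) ^ 2 + (σ n t) ^ 2)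
        - s n t / Real.sqrt ((s n t) ^ 2 + (σ n t) ^ 2)))
    (K₁ : ℝ)
    (hK₁ : K₁ = 2 * (Finset.Icc 1 n).inf' (Finset.nonempty_Icc.mpr (by omega)) k) :
    -- (i) boundedness and prescribed-time bound for Vₙ = (1/2)Σ sᵢ²
    ((∃ M : ℝ, ∀ t ≥ (0:ℝ), (1 / 2 : ℝ) * ∑ i ∈ Finset.Icc 1 n, (s i t) ^ 2 ≤ M) ∧
      (1 / 2 : ℝ) * ∑ i ∈ Finset.Icc 1 n, (s i T) ^ 2 ≤
        ((1 / 2 : ℝ) * ∑ i ∈ Finset.Icc 1 n, (s i 0) ^ 2) *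
          (ε / (T + ε)) ^ (K₁ * (T + ε))) ∧
    -- (ii) asymptotic convergence of sᵢ and ζᵢ
    (∀ i ∈ Finset.Icc 1 n,
      Tendsto (s i) atTop (nhds 0) ∧ Tendsto (ζ i) atTop (nhds 0)) ∧
    -- (iii) boundedness and asymptotic convergence of the tracking error
    ((∃ M : ℝ, ∀ t ≥ (0:ℝ), |x 1 t - xd t| ≤ M) ∧
      Tendsto (fun t => x 1 t - xd t) atTop (nhds 0)) := by
  have hμ : ∀ t ≥ (0:ℝ), 1 ≤ μ t := fun t ht => one_le_gain hT.le hε hμ1 hμ2 ht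
  have hKk : ∀ i ∈ Finset.Icc 1 n, K₁ ≤ 2 * k i := fun i hi => by
    rw [hK₁]; linarith [Finset.inf'_le k hi]
  have hK : 0 < K₁ := by
    rw [hK₁]; linarith [(Finset.lt_inf'_iff (a := 0) (Finset.nonempty_Icc.2 (by omega))).2 hk]
  have hg : ∀ i ∈ Finset.Icc 1 n, ∀ t ≥ (0:ℝ), 0 < g i t := fun i hi t ht =>
    hg₀.trans_le (hg_lower i hi t ht)
  obtain ⟨M, hM⟩ := hfg_bdd
  have hd := abs_couplingGain_mul_sub_le
    (fun i hi => ⟨M, by rintro _ ⟨t, ht, rfl⟩; exact (le_abs_self _).trans (hM i hi t ht).2⟩)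
    (fun i hi t ht => (hg i hi t ht).le) hfilt_err hl hln
  have hζd := hasDerivWithinAt_compensator hn hζ1 hζmid hζn
  have hsd := hasDerivWithinAt_compensatedError hn (fun i hi t ht => (hg i hi t ht).ne') hxd_deriv
    hplant hplantn hfilt_deriv hz1 hz hs hζd hα1 hαmid hu
  obtain ⟨hVs_le, hVs_T, hVs_lim⟩ :=
    sum_sq_compensatedError_le_and_tendsto_zero hT.le hε hμ1 hμ2 hK hKk hsd
  obtain ⟨⟨B, hVζ_le⟩, hVζ_lim⟩ := sum_sq_compensator_bddAbove_and_tendsto_zero hK hk hKk hμ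
    hσcont hσpos (fun i hi => (hσint i hi).1.mono_set Set.Ioi_subset_Ici_self) hd hζd
  have h1 : 1 ∈ Finset.Icc 1 n := Finset.mem_Icc.2 ⟨le_rfl, by omega⟩
  have htrack : ∀ t, x 1 t - xd t = s 1 t + ζ 1 t := fun t => by rw [hs 1 h1, hz1]; ring
  refine ⟨⟨⟨_, fun t ht => mul_le_mul_of_nonneg_left (hVs_le t ht) (by norm_num)⟩,
    by linear_combination (1 / 2 : ℝ) * hVs_T⟩,
    fun i hi =>
      ⟨tendsto_zero_of_tendsto_sum_sq hVs_lim hi, tendsto_zero_of_tendsto_sum_sq hVζ_lim hi⟩,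
    ⟨⟨√(∑ i ∈ Finset.Icc 1 n, s i 0 ^ 2) + √B, fun t ht => ?_⟩, ?_⟩⟩
  · rw [htrack]
    exact (abs_add_le _ _).trans (add_le_add
      ((abs_le_sqrt_sum_sq h1).trans (Real.sqrt_le_sqrt (hVs_le t ht)))
      ((abs_le_sqrt_sum_sq h1).trans (Real.sqrt_le_sqrt (hVζ_le t ht))))
  · simpa [htrack] using
      (tendsto_zero_of_tendsto_sum_sq hVs_lim h1).add (tendsto_zero_of_tendsto_sum_sq hVζ_lim h1)
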